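/- arXiv:2008.02140 — 4 statements merged into one kernel-verified Lean document; each statement's English description precedes it below -/
import Mathlib

section
/- Completeness with respect to the inductive characterization of regular semantics: for every logic program with coclauses (P,coP), every finite set H of finite atoms, every goal ⟨A1,...,An | E⟩ and every ground substitution σ ∈ sol(E) defined on all variables of H and of A1,...,An, if for every i ∈ {1,...,n} the judgment (Hσ ⊢ Aiσ) belongs to the inductive interpretation of Loop(P,coP), then there exist a finite set of equations E' and θ ∈ sol(E') such that P;coP ⊢ H : ⟨A1,...,An | E⟩ ⇒ E' is derivable and σ ⊑ θ. -/
/-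
Induction on the height of the `Loop` derivations of the goal atoms, and for a fixed height on
the goal. A (rule) node for the head `A`, built from a ground instance `Cτ` of a clause, is
simulated by (step): `C` is renamed apart by `x ↦ N + x` with `N` above `dom σ` (which contains
every variable in play), and extending `σ` by `N + x ↦ τ x` gives a solution of the new equations that maps the renamed body onto the
premises, so the induction hypothesis resolves the body. An (hp) node is simulated by (co-hyp):
`A` unifies with the hypothesis under `σ`, and `Aσ ∈ Ind (P ∪ coP)` is a derivation without
hypotheses, resolved by the same argument for the program `P ∪ coP` without coclauses.
-/

/- Framework: flexible coinductive logic programming (logic programs with coclauses).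
   Terms are possibly infinite trees, modelled as M-types of a polynomial functor. -/

namespace FlexLP

/-- A first-order signature: function symbols and predicate symbols, each with an arity.
Variables are represented by natural numbers (a countably infinite set). -/
structure Sig where
  Func : Type
  far : Func → ℕ
  Pred : Type
  par : Pred → ℕ

/-- Polynomial functor whose M-type is the type of possibly infinite terms:
nodes are labelled by function symbols (with `far` children) or variables (no children). -/
def TermP (S : Sig) : PFunctor :=
  ⟨S.Func ⊕ ℕ, fun l => Fin (match l with | Sum.inl f => S.far f | Sum.inr _ => 0)⟩

/-- Possibly infinite terms over the signature `S`. -/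
def Term (S : Sig) : Type := (TermP S).M

/-- The term consisting of a single variable `x`. -/
def Term.var (S : Sig) (x : ℕ) : Term S :=
  PFunctor.M.mk ⟨Sum.inr x, fun i => i.elim0⟩

/-- The variable `x` occurs in the term `t`. -/
inductive Term.Occurs (S : Sig) (x : ℕ) : Term S → Prop
  | root (t : Term S) (h : (PFunctor.M.dest t).1 = Sum.inr x) : Term.Occurs S x t
  | child (t : Term S) (i : (TermP S).B (PFunctor.M.dest t).1)
      (h : Term.Occurs S x ((PFunctor.M.dest t).2 i)) : Term.Occurs S x t

/-- The term `t` is finite (syntactic): all its branches are finite. -/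
inductive Term.IsFinite (S : Sig) : Term S → Prop
  | mk (t : Term S) (h : ∀ i, Term.IsFinite S ((PFunctor.M.dest t).2 i)) : Term.IsFinite S t

/-- The term `t` is ground: no variable occurs in it. -/
def Term.Ground (S : Sig) (t : Term S) : Prop := ∀ x, ¬ Term.Occurs S x t

/-- A substitution: a map from a finite set of variables to terms. -/
structure Subst (S : Sig) where
  toFun : ℕ → Option (Term S)
  finDom : {x | (toFun x).isSome}.Finite

/-- Domain of a substitution. -/
def Subst.dom {S : Sig} (σ : Subst S) : Set ℕ := {x | (σ.toFun x).isSome}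

/-- A substitution is ground if all its values are ground terms. -/
def Subst.Ground {S : Sig} (σ : Subst S) : Prop :=
  ∀ x t, σ.toFun x = some t → Term.Ground S t

/-- `σ ⊑ θ` : `dom σ ⊆ dom θ` and the two substitutions agree on `dom σ`. -/
def Subst.le {S : Sig} (σ θ : Subst S) : Prop :=
  ∀ x t, σ.toFun x = some t → θ.toFun x = some t

/-- One step of (simultaneous) substitution application, as a coalgebra.
The boolean flag records whether we are still in the original term (`true`)
or inside a substituted term (`false`). -/
def substStep (S : Sig) (σ : Subst S) : Term S × Bool → (TermP S).Obj (Term S × Bool) :=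
  fun p =>
    match PFunctor.M.dest p.1, p.2 with
    | ⟨Sum.inl f, ch⟩, b => ⟨Sum.inl f, fun i => (ch i, b)⟩
    | ⟨Sum.inr x, ch⟩, true =>
        match σ.toFun x with
        | some s =>
            match PFunctor.M.dest s with
            | ⟨l, ch'⟩ => ⟨l, fun i => (ch' i, false)⟩
        | none => ⟨Sum.inr x, fun i => (ch i, true)⟩
    | ⟨Sum.inr x, ch⟩, false => ⟨Sum.inr x, fun i => (ch i, false)⟩

/-- Application `tσ` of a substitution to a term. -/
def Term.subst {S : Sig} (t : Term S) (σ : Subst S) : Term S :=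
  PFunctor.M.corec (substStep S σ) (t, true)

/-- Atoms: a predicate symbol applied to terms (a possibly infinite tree whose
root is labelled by a predicate symbol). -/
structure Atom (S : Sig) where
  pred : S.Pred
  args : Fin (S.par pred) → Term S

/-- The variable `x` occurs in the atom `A`. -/
def Atom.Occurs {S : Sig} (x : ℕ) (A : Atom S) : Prop := ∃ i, Term.Occurs S x (A.args i)

/-- Ground atoms. The set of all ground atoms is the complete Herbrand base. -/
def Atom.Ground {S : Sig} (A : Atom S) : Prop := ∀ i, Term.Ground S (A.args i)

/-- Finite (syntactic) atoms. -/
def Atom.IsFinite {S : Sig} (A : Atom S) : Prop := ∀ i, Term.IsFinite S (A.args i)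

/-- Application of a substitution to an atom. -/
def Atom.subst {S : Sig} (A : Atom S) (σ : Subst S) : Atom S :=
  ⟨A.pred, fun i => Term.subst (A.args i) σ⟩

/-- A (definite) clause `head :- body`, made of finite atoms. -/
structure Clause (S : Sig) where
  head : Atom S
  body : List (Atom S)
  finHead : head.IsFinite
  finBody : ∀ B ∈ body, B.IsFinite

/-- Variables occurring in a clause. -/
def clauseVars {S : Sig} (C : Clause S) : Set ℕ :=
  {x | Atom.Occurs x C.head ∨ ∃ B ∈ C.body, Atom.Occurs x B}

/-- `Ground P` : the ground instances of clauses of `P`, viewed as inference rules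
(pairs premises/conclusion) on the complete Herbrand base. -/
def GroundInst {S : Sig} (P : Set (Clause S)) : Set (Atom S × List (Atom S)) :=
  {r | ∃ C ∈ P, ∃ σ : Subst S, σ.Ground ∧
        r.1 = C.head.subst σ ∧ r.2 = C.body.map (fun B => B.subst σ) ∧
        r.1.Ground ∧ ∀ B ∈ r.2, B.Ground}

/-- The (one step) inference operator `T_P` associated to a program. -/
def TP {S : Sig} (P : Set (Clause S)) (I : Set (Atom S)) : Set (Atom S) :=
  {A | ∃ r ∈ GroundInst P, r.1 = A ∧ ∀ B ∈ r.2, B ∈ I}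

/-- `I` is a model of `P`. -/
def IsModel {S : Sig} (P : Set (Clause S)) (I : Set (Atom S)) : Prop := TP P I ⊆ I

/-- `I` is a comodel of `P`. -/
def IsComodel {S : Sig} (P : Set (Clause S)) (I : Set (Atom S)) : Prop := I ⊆ TP P I

/-- `Ind P` : the inductive declarative semantics, i.e. the least model of `P`. -/
def Ind {S : Sig} (P : Set (Clause S)) : Set (Atom S) := ⋂₀ {I | IsModel P I}

/-- `FlexCo (P,coP)` : the declarative semantics of a logic program with coclauses,
i.e. the largest comodel of `P` included in `Ind (P ∪ coP)` (union of all such comodels). -/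
def FlexCo {S : Sig} (P coP : Set (Clause S)) : Set (Atom S) :=
  ⋃₀ {I | IsComodel P I ∧ I ⊆ Ind (P ∪ coP)}

/-- `FlexReg (P,coP)` : the regular declarative semantics, i.e. the union of all
finite comodels of `P` included in `Ind (P ∪ coP)`. -/
def FlexReg {S : Sig} (P coP : Set (Clause S)) : Set (Atom S) :=
  ⋃₀ {I | I.Finite ∧ IsComodel P I ∧ I ⊆ Ind (P ∪ coP)}

/-- An equation `s ≐ t` between terms. -/
abbrev Eqn (S : Sig) := Term S × Term S

/-- Variables occurring in a set of equations. -/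
def eqnVars {S : Sig} (E : Set (Eqn S)) : Set ℕ :=
  {x | ∃ e ∈ E, Term.Occurs S x e.1 ∨ Term.Occurs S x e.2}

/-- `E` is a finite set of equations between finite (syntactic) terms. -/
def EqnSetFin {S : Sig} (E : Set (Eqn S)) : Prop :=
  E.Finite ∧ ∀ e ∈ E, Term.IsFinite S e.1 ∧ Term.IsFinite S e.2

/-- `sol E` : the set of solutions of `E`, i.e. ground substitutions defined on all
variables of `E` that unify all the equations in `E`. -/
def sol {S : Sig} (E : Set (Eqn S)) : Set (Subst S) :=
  {σ | σ.Ground ∧ eqnVars E ⊆ σ.dom ∧ ∀ e ∈ E, e.1.subst σ = e.2.subst σ}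

/-- `E` is solvable. -/
def Solvable {S : Sig} (E : Set (Eqn S)) : Prop := (sol E).Nonempty

/-- `eqs(A,B)` : the equations between the corresponding arguments of two atoms
with the same predicate symbol. -/
def atomEqs {S : Sig} (A B : Atom S) : Set (Eqn S) :=
  {e | ∃ (h : A.pred = B.pred) (i : Fin (S.par A.pred)),
        e = (A.args i, B.args (Fin.cast (congrArg S.par h) i))}

/-- Variables occurring in a set of atoms. -/
def atomsVars {S : Sig} (H : Set (Atom S)) : Set ℕ := {x | ∃ A ∈ H, Atom.Occurs x A}

/-- Variables occurring in a sequence of atoms (a goal). -/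
def goalVars {S : Sig} (G : List (Atom S)) : Set ℕ := {x | ∃ A ∈ G, Atom.Occurs x A}

/-- `ρ` is a renaming of the variables of clause `C` to fresh variables avoiding `avoid`:
it maps (injectively) every variable of `C` to a variable not in `avoid`. -/
def FreshRenamingFor {S : Sig} (ρ : Subst S) (C : Clause S) (avoid : Set ℕ) : Prop :=
  (∀ x t, ρ.toFun x = some t → ∃ y, t = Term.var S y ∧ y ∉ avoid) ∧
  clauseVars C ⊆ ρ.dom ∧
  (∀ x y, ρ.toFun x = ρ.toFun y → (ρ.toFun x).isSome → x = y)

/-- The big-step operational semantics judgment `P;coP ⊢ H : ⟨G | E⟩ ⇒ E'` of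
flexible coSLD resolution, inductively defined by the rules (empty), (co-hyp), (step). -/
inductive OpSem (S : Sig) :
    Set (Clause S) → Set (Clause S) → Set (Atom S) → List (Atom S) →
      Set (Eqn S) → Set (Eqn S) → Prop
  | empty (P coP : Set (Clause S)) (H : Set (Atom S)) (E : Set (Eqn S)) :
      OpSem S P coP H [] E E
  | cohyp {P coP : Set (Clause S)} {H : Set (Atom S)} {G1 G2 : List (Atom S)}
      {A B : Atom S} {E1 E2 E3 : Set (Eqn S)} :
      coP ≠ ∅ → B ∈ H → A.pred = B.pred →
      Solvable (E1 ∪ atomEqs A B) →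
      OpSem S (P ∪ coP) ∅ ∅ [A] (E1 ∪ atomEqs A B) E2 →
      OpSem S P coP H (G1 ++ G2) E2 E3 →
      OpSem S P coP H (G1 ++ A :: G2) E1 E3
  | step {P coP : Set (Clause S)} {H : Set (Atom S)} {G1 G2 : List (Atom S)}
      {A : Atom S} {E1 E2 E3 : Set (Eqn S)} (C : Clause S) (ρ : Subst S) :
      C ∈ P →
      FreshRenamingFor ρ C (eqnVars E1 ∪ atomsVars H ∪ goalVars (G1 ++ A :: G2)) →
      A.pred = C.head.pred →
      Solvable (E1 ∪ atomEqs A (C.head.subst ρ)) →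
      OpSem S P coP (H ∪ {A}) (C.body.map (fun B => B.subst ρ))
        (E1 ∪ atomEqs A (C.head.subst ρ)) E2 →
      OpSem S P coP H (G1 ++ G2) E2 E3 →
      OpSem S P coP H (G1 ++ A :: G2) E1 E3

/-- `Ans(G,E,I)` : the set of answers to the goal `⟨G | E⟩` correct in the
interpretation `I`. -/
def Ans {S : Sig} (G : List (Atom S)) (E : Set (Eqn S)) (I : Set (Atom S)) :
    Set (Subst S) :=
  {σ | σ ∈ sol E ∧ goalVars G ⊆ σ.dom ∧ ∀ A ∈ G, A.subst σ ∈ I}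

/-- The inductive interpretation of the inference system `Loop(P,coP)`, whose judgments
`H ⊢ A` pair a ground atom with a set of ground atoms (circular hypotheses);
rules: (hp) `H ⊢ A` if `A ∈ H` and `A ∈ Ind (P ∪ coP)`;
(rule) from `H∪{A} ⊢ B` for every premise `B` of a ground instance of a clause of `P`
with conclusion `A`, infer `H ⊢ A`. -/
inductive LoopInd {S : Sig} (P coP : Set (Clause S)) : Set (Atom S) → Atom S → Prop
  | hp {H : Set (Atom S)} {A : Atom S} :
      A ∈ H → A ∈ Ind (P ∪ coP) → LoopInd P coP H A
  | rule {H : Set (Atom S)} {A : Atom S} (r : Atom S × List (Atom S)) :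
      r ∈ GroundInst P → r.1 = A →
      (∀ B ∈ r.2, LoopInd P coP (H ∪ {A}) B) →
      LoopInd P coP H A

variable {S : Sig}

namespace Term

def app (f : S.Func) (ch : Fin (S.far f) → Term S) : Term S :=
  PFunctor.M.mk ⟨Sum.inl f, ch⟩

theorem app_or_var (t : Term S) : (∃ f ch, t = app f ch) ∨ ∃ x, t = var S x := by
  rw [← PFunctor.M.mk_dest t]
  obtain ⟨f | x, ch⟩ := PFunctor.M.dest t
  · exact Or.inl ⟨f, ch, rfl⟩
  · refine Or.inr ⟨x, ?_⟩
    unfold var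
    congr
    funext i
    exact i.elim0

theorem var_injective : Function.Injective (var S) := fun x y h => by
  have := congrArg Sigma.fst (PFunctor.M.mk_inj h)
  injection this

theorem dest_var (x : ℕ) :
    PFunctor.M.dest (var S x) = (⟨Sum.inr x, fun i => i.elim0⟩ : (TermP S).Obj (Term S)) := rfl

theorem occurs_app_iff {y : ℕ} {f : S.Func} {ch : Fin (S.far f) → Term S} :
    Occurs S y (app f ch) ↔ ∃ i, Occurs S y (ch i) := by
  refine ⟨fun h => ?_, fun ⟨i, h⟩ => .child _ i h⟩
  cases h with
  | root _ h => exact absurd h Sum.inl_ne_inr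
  | child _ i h => exact ⟨i, h⟩

theorem occurs_var_iff {x y : ℕ} : Occurs S y (var S x) ↔ y = x := by
  refine ⟨fun h => ?_, fun h => .root _ (h ▸ rfl)⟩
  cases h with
  | root _ h => exact (Sum.inr_injective h).symm
  | child _ i _ => exact i.elim0

theorem isFinite_var (x : ℕ) : IsFinite S (var S x) :=
  .mk _ fun i => i.elim0

theorem IsFinite.app {f : S.Func} {ch : Fin (S.far f) → Term S} (h : ∀ i, IsFinite S (ch i)) :
    IsFinite S (Term.app f ch) :=
  .mk _ h

theorem IsFinite.induction_app_var {motive : Term S → Prop} (hvar : ∀ x, motive (var S x))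
    (happ : ∀ f ch, (∀ i, IsFinite S (ch i)) → (∀ i, motive (ch i)) → motive (Term.app f ch))
    {t : Term S} (ht : IsFinite S t) : motive t := by
  induction ht with
  | mk t h ih =>
    obtain ⟨f, ch, rfl⟩ | ⟨x, rfl⟩ := t.app_or_var
    · exact happ f ch h ih
    · exact hvar x

theorem coinduction {F G : Term S → Term S} {Q : Term S → Prop}
    (hvar : ∀ x, Q (var S x) → F (var S x) = G (var S x))
    (happ : ∀ f ch, Q (app f ch) → (∀ i, Q (ch i)) ∧
      F (app f ch) = app f (fun i => F (ch i)) ∧ G (app f ch) = app f (fun i => G (ch i)))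
    {t : Term S} (ht : Q t) : F t = G t := by
  refine PFunctor.M.bisim (fun a b => a = b ∨ ∃ t, Q t ∧ a = F t ∧ b = G t) ?_ _ _
    (Or.inr ⟨t, ht, rfl, rfl⟩)
  have hrefl (a : Term S) : ∃ l ch ch', PFunctor.M.dest a = ⟨l, ch⟩ ∧
      PFunctor.M.dest a = ⟨l, ch'⟩ ∧ ∀ i, ch i = ch' i ∨ ∃ t, Q t ∧ ch i = F t ∧ ch' i = G t :=
    ⟨_, _, _, rfl, rfl, fun _ => Or.inl rfl⟩
  rintro a b (rfl | ⟨t, ht, rfl, rfl⟩)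
  · exact hrefl a
  · obtain ⟨f, ch, rfl⟩ | ⟨x, rfl⟩ := t.app_or_var
    · obtain ⟨hch, hF, hG⟩ := happ f ch ht
      rw [hF, hG]
      exact ⟨_, _, _, rfl, rfl, fun i => Or.inr ⟨ch i, hch i, rfl, rfl⟩⟩
    · rw [hvar x ht]
      exact hrefl _

theorem corec_substStep_app (σ : Subst S) (f : S.Func) (ch : Fin (S.far f) → Term S) (b : Bool) :
    PFunctor.M.corec (substStep S σ) (app f ch, b) =
      app f (fun i => PFunctor.M.corec (substStep S σ) (ch i, b)) := by
  rw [← PFunctor.M.mk_dest (PFunctor.M.corec _ _), PFunctor.M.dest_corec]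
  rfl

theorem corec_substStep_false (σ : Subst S) (u : Term S) :
    PFunctor.M.corec (substStep S σ) (u, false) = u := by
  refine coinduction (F := fun u => PFunctor.M.corec (substStep S σ) (u, false)) (G := id)
    (Q := fun _ => True) (fun x _ => ?_)
    (fun f ch _ => ⟨fun _ => trivial, corec_substStep_app σ f ch false, rfl⟩) trivial
  rw [← PFunctor.M.mk_dest (PFunctor.M.corec _ _), PFunctor.M.dest_corec]
  show PFunctor.M.mk (⟨Sum.inr x, _⟩ : (TermP S).Obj (Term S)) =
    PFunctor.M.mk (⟨Sum.inr x, _⟩ : (TermP S).Obj (Term S))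
  congr 2
  funext i
  exact i.elim0

theorem app_subst (σ : Subst S) (f : S.Func) (ch : Fin (S.far f) → Term S) :
    (app f ch).subst σ = app f (fun i => (ch i).subst σ) :=
  corec_substStep_app σ f ch true

theorem var_subst (σ : Subst S) (x : ℕ) : (var S x).subst σ = (σ.toFun x).getD (var S x) := by
  rw [← PFunctor.M.mk_dest ((var S x).subst σ), subst, PFunctor.M.dest_corec]
  cases hx : σ.toFun x with
  | some s =>
    rcases hs : PFunctor.M.dest s with ⟨l, ch⟩
    simp only [substStep, dest_var, hx, hs, Option.getD_some]
    rw [← PFunctor.M.mk_dest s, hs, PFunctor.map_eq]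
    congr 2
    funext i
    exact corec_substStep_false σ (ch i)
  | none =>
    simp only [substStep, dest_var, hx, Option.getD_none]
    show PFunctor.M.mk (⟨Sum.inr x, _⟩ : (TermP S).Obj (Term S)) =
      PFunctor.M.mk (⟨Sum.inr x, _⟩ : (TermP S).Obj (Term S))
    congr 2
    funext i
    exact i.elim0

theorem subst_congr {σ θ : Subst S} {t : Term S}
    (h : ∀ x, Occurs S x t → σ.toFun x = θ.toFun x) : t.subst σ = t.subst θ :=
  coinduction (F := (·.subst σ)) (G := (·.subst θ))
    (Q := fun t => ∀ x, Occurs S x t → σ.toFun x = θ.toFun x)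
    (fun x hx => by rw [var_subst, var_subst, hx x (occurs_var_iff.2 rfl)])
    (fun f ch hch => ⟨fun i x hx => hch x (occurs_app_iff.2 ⟨i, hx⟩), app_subst σ f ch,
      app_subst θ f ch⟩) h

theorem subst_subst_of_var {ρ θ τ : Subst S} {t : Term S}
    (h : ∀ x, Occurs S x t → ((var S x).subst ρ).subst θ = (var S x).subst τ) :
    (t.subst ρ).subst θ = t.subst τ :=
  coinduction (F := fun t => (t.subst ρ).subst θ) (G := (·.subst τ))
    (Q := fun t => ∀ x, Occurs S x t → ((var S x).subst ρ).subst θ = (var S x).subst τ)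
    (fun x hx => hx x (occurs_var_iff.2 rfl))
    (fun f ch hch => ⟨fun i x hx => hch x (occurs_app_iff.2 ⟨i, hx⟩),
      by rw [app_subst, app_subst], app_subst τ f ch⟩) h

theorem Occurs.subst_of_none {σ : Subst S} {x : ℕ} {t : Term S} (h : Occurs S x t)
    (hx : σ.toFun x = none) : Occurs S x (t.subst σ) := by
  induction h with
  | root t h =>
    obtain ⟨f, ch, rfl⟩ | ⟨y, rfl⟩ := t.app_or_var
    · exact absurd h Sum.inl_ne_inr
    · obtain rfl : y = x := Sum.inr_injective h
      rw [var_subst, hx, Option.getD_none]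
      exact occurs_var_iff.2 rfl
  | child t i _ ih =>
    obtain ⟨f, ch, rfl⟩ | ⟨y, rfl⟩ := t.app_or_var
    · rw [app_subst]
      exact occurs_app_iff.2 ⟨i, ih⟩
    · exact i.elim0

theorem mem_dom_of_ground_subst {σ : Subst S} {x : ℕ} {t : Term S}
    (h : Ground S (t.subst σ)) (hx : Occurs S x t) : x ∈ σ.dom := by
  by_contra hn
  exact h x (hx.subst_of_none (Option.not_isSome_iff_eq_none.1 hn))

theorem IsFinite.subst {σ : Subst S} {t : Term S} (ht : IsFinite S t)
    (hσ : ∀ x s, σ.toFun x = some s → IsFinite S s) : IsFinite S (t.subst σ) := by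
  refine IsFinite.induction_app_var (motive := fun t => IsFinite S (t.subst σ)) (fun x => ?_)
    (fun f ch _ ih => ?_) ht
  · rw [var_subst]
    cases hx : σ.toFun x with
    | some s => exact hσ x s hx
    | none => exact isFinite_var x
  · rw [app_subst]
    exact IsFinite.app ih

end Term

theorem Subst.le_refl (σ : Subst S) : σ.le σ := fun _ _ h => h

theorem Subst.le_trans {σ θ μ : Subst S} (h₁ : σ.le θ) (h₂ : θ.le μ) : σ.le μ :=
  fun x t h => h₂ x t (h₁ x t h)

theorem Subst.le.toFun_eq {σ θ : Subst S} (h : σ.le θ) {x : ℕ} (hx : x ∈ σ.dom) :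
    θ.toFun x = σ.toFun x := by
  obtain ⟨t, ht⟩ := Option.isSome_iff_exists.1 hx
  rw [ht, h x t ht]

theorem Subst.le.dom_subset {σ θ : Subst S} (h : σ.le θ) : σ.dom ⊆ θ.dom := fun x hx => by
  simpa [Subst.dom, h.toFun_eq hx] using hx

theorem Subst.exists_dom_lt (σ : Subst S) : ∃ N, ∀ x ∈ σ.dom, x < N :=
  let ⟨b, hb⟩ := σ.finDom.bddAbove
  ⟨b + 1, fun _ hx => Nat.lt_succ_of_le (hb hx)⟩

theorem Term.subst_eq_of_le {σ θ : Subst S} (h : σ.le θ) {t : Term S}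
    (ht : ∀ x, Term.Occurs S x t → x ∈ σ.dom) : t.subst θ = t.subst σ :=
  Term.subst_congr fun x hx => h.toFun_eq (ht x hx)

namespace Atom

theorem subst_eq_of_le {σ θ : Subst S} (h : σ.le θ) {A : Atom S}
    (hA : ∀ x, A.Occurs x → x ∈ σ.dom) : A.subst θ = A.subst σ := by
  simp only [Atom.subst, Atom.mk.injEq, heq_eq_eq, true_and]
  exact funext fun i => Term.subst_eq_of_le h fun x hx => hA x ⟨i, hx⟩

theorem subst_subst_of_var {ρ θ τ : Subst S} {A : Atom S}
    (h : ∀ x, A.Occurs x → ((Term.var S x).subst ρ).subst θ = (Term.var S x).subst τ) :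
    (A.subst ρ).subst θ = A.subst τ := by
  simp only [Atom.subst, Atom.mk.injEq, heq_eq_eq, true_and]
  exact funext fun i => Term.subst_subst_of_var fun x hx => h x ⟨i, hx⟩

theorem mem_dom_of_ground_subst {σ : Subst S} {x : ℕ} {A : Atom S}
    (h : (A.subst σ).Ground) (hx : A.Occurs x) : x ∈ σ.dom :=
  let ⟨i, hi⟩ := hx
  Term.mem_dom_of_ground_subst (h i) hi

theorem IsFinite.subst {σ : Subst S} {A : Atom S} (hA : A.IsFinite)
    (hσ : ∀ x s, σ.toFun x = some s → Term.IsFinite S s) : (A.subst σ).IsFinite :=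
  fun i => (hA i).subst hσ

end Atom

theorem atomEqs_finite (A B : Atom S) : (atomEqs A B).Finite := by
  by_cases h : A.pred = B.pred
  · refine (Set.finite_range fun i : Fin (S.par A.pred) =>
      ((A.args i, B.args (Fin.cast (congrArg S.par h) i)) : Eqn S)).subset ?_
    rintro e ⟨_, i, rfl⟩
    exact ⟨i, rfl⟩
  · refine Set.finite_empty.subset ?_
    rintro e ⟨h', _⟩
    exact absurd h' h

theorem EqnSetFin.union_atomEqs {E : Set (Eqn S)} (hE : EqnSetFin E) {A B : Atom S}
    (hA : A.IsFinite) (hB : B.IsFinite) : EqnSetFin (E ∪ atomEqs A B) := by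
  refine ⟨hE.1.union (atomEqs_finite A B), ?_⟩
  rintro e (he | ⟨_, i, rfl⟩)
  exacts [hE.2 e he, ⟨hA i, hB _⟩]

theorem mem_sol_of_le {E : Set (Eqn S)} {σ θ : Subst S} (hσ : σ ∈ sol E) (hle : σ.le θ)
    (hθ : θ.Ground) : θ ∈ sol E := by
  obtain ⟨-, hdom, heq⟩ := hσ
  refine ⟨hθ, hdom.trans hle.dom_subset, fun e he => ?_⟩
  rw [Term.subst_eq_of_le hle fun x hx => hdom ⟨e, he, .inl hx⟩,
    Term.subst_eq_of_le hle fun x hx => hdom ⟨e, he, .inr hx⟩]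
  exact heq e he

theorem mem_sol_union_atomEqs {E : Set (Eqn S)} {θ : Subst S} (hθ : θ ∈ sol E) {A B : Atom S}
    (hA : ∀ x, A.Occurs x → x ∈ θ.dom) (hB : ∀ x, B.Occurs x → x ∈ θ.dom)
    (h : A.subst θ = B.subst θ) : θ ∈ sol (E ∪ atomEqs A B) := by
  obtain ⟨hg, hdom, heq⟩ := hθ
  refine ⟨hg, ?_, ?_⟩
  · rintro x ⟨e, he | ⟨_, i, rfl⟩, hx⟩
    · exact hdom ⟨e, he, hx⟩
    · exact hx.elim (fun hx => hA x ⟨_, hx⟩) fun hx => hB x ⟨_, hx⟩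
  · rintro e (he | ⟨hp, i, rfl⟩)
    · exact heq e he
    · obtain ⟨p, a⟩ := A
      obtain ⟨q, b⟩ := B
      obtain rfl : p = q := hp
      simp only [Atom.subst, Atom.mk.injEq, heq_eq_eq, true_and] at h
      exact congrFun h i

/-- Renames every variable `x ∈ dom τ` to `N + x`. -/
def Subst.shiftRename (τ : Subst S) (N : ℕ) : Subst S where
  toFun x := (τ.toFun x).map fun _ => Term.var S (N + x)
  finDom := by simpa only [Option.isSome_map] using τ.finDom

/-- Extends `σ` by `N + x ↦ τ x`. -/
def Subst.extendShifted (σ τ : Subst S) (N : ℕ) : Subst S where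
  toFun z := (σ.toFun z).or (if N ≤ z then τ.toFun (z - N) else none)
  finDom := by
    refine (σ.finDom.union (τ.finDom.image (N + ·))).subset fun z hz => ?_
    simp only [Set.mem_ofPred_eq, Option.isSome_or, Bool.or_eq_true] at hz
    rcases hz with hz | hz
    · exact .inl hz
    · split_ifs at hz with hN
      · exact .inr ⟨z - N, hz, Nat.add_sub_of_le hN⟩
      · exact absurd hz (by simp)

theorem Subst.le_extendShifted (σ τ : Subst S) (N : ℕ) : σ.le (σ.extendShifted τ N) :=
  fun x t h => by simp [Subst.extendShifted, h]

theorem Subst.Ground.extendShifted {σ τ : Subst S} (hσ : σ.Ground) (hτ : τ.Ground) (N : ℕ) :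
    (σ.extendShifted τ N).Ground := by
  intro z t h
  simp only [Subst.extendShifted] at h
  cases hz : σ.toFun z with
  | some s => rw [hz, Option.some_or] at h; exact hσ z t (hz.trans h)
  | none =>
    rw [hz, Option.none_or] at h
    split_ifs at h
    exact hτ _ t h

theorem Subst.extendShifted_add {σ : Subst S} {N : ℕ} (hN : ∀ x ∈ σ.dom, x < N) (τ : Subst S)
    (x : ℕ) : (σ.extendShifted τ N).toFun (N + x) = τ.toFun x := by
  have : σ.toFun (N + x) = none :=
    Option.not_isSome_iff_eq_none.1 fun h => absurd (hN _ h) (by omega)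
  simp [Subst.extendShifted, this]

theorem Subst.var_subst_shiftRename_extendShifted {σ τ : Subst S} {N : ℕ}
    (hN : ∀ x ∈ σ.dom, x < N) {x : ℕ} (hx : x ∈ τ.dom) :
    ((Term.var S x).subst (τ.shiftRename N)).subst (σ.extendShifted τ N) =
      (Term.var S x).subst τ := by
  obtain ⟨s, hs⟩ := Option.isSome_iff_exists.1 hx
  simp [Term.var_subst, Subst.shiftRename, hs, Subst.extendShifted_add hN]

theorem freshRenamingFor_shiftRename {C : Clause S} {τ : Subst S} (hC : clauseVars C ⊆ τ.dom)
    {V : Set ℕ} {N : ℕ} (hN : ∀ x ∈ V, x < N) : FreshRenamingFor (τ.shiftRename N) C V := by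
  refine ⟨fun x t ht => ?_, fun x hx => ?_, fun x y hxy hx => ?_⟩
  · obtain ⟨_, -, rfl⟩ := Option.map_eq_some_iff.1 ht
    exact ⟨N + x, rfl, fun h => absurd (hN _ h) (by omega)⟩
  · simpa [Subst.dom, Subst.shiftRename] using hC hx
  · obtain ⟨s, hs⟩ := Option.isSome_iff_exists.1 hx
    obtain ⟨_, -, rfl⟩ := Option.map_eq_some_iff.1 hs
    obtain ⟨_, -, h⟩ := Option.map_eq_some_iff.1 (hxy.symm.trans hs)
    exact (Nat.add_left_cancel (Term.var_injective h)).symm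

theorem FreshRenamingFor.isFinite_subst {ρ : Subst S} {C : Clause S} {V : Set ℕ}
    (hρ : FreshRenamingFor ρ C V) {A : Atom S} (hA : A.IsFinite) : (A.subst ρ).IsFinite :=
  hA.subst fun x s hs => by
    obtain ⟨y, rfl, -⟩ := hρ.1 x s hs
    exact Term.isFinite_var y

theorem FreshRenamingFor.mono {ρ : Subst S} {C : Clause S} {V W : Set ℕ}
    (hρ : FreshRenamingFor ρ C W) (hVW : V ⊆ W) : FreshRenamingFor ρ C V :=
  ⟨fun x t h => let ⟨y, hy, hyW⟩ := hρ.1 x t h; ⟨y, hy, fun hyV => hyW (hVW hyV)⟩, hρ.2⟩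

theorem exists_freshRenaming_extension (C : Clause S) {σ τ : Subst S} (hσ : σ.Ground)
    (hτ : τ.Ground) (hC : clauseVars C ⊆ τ.dom) :
    ∃ ρ θ, FreshRenamingFor ρ C σ.dom ∧ σ.le θ ∧ θ.Ground ∧
      ∀ B ∈ C.head :: C.body, (B.subst ρ).subst θ = B.subst τ := by
  obtain ⟨N, hN⟩ := σ.exists_dom_lt
  refine ⟨τ.shiftRename N, σ.extendShifted τ N, freshRenamingFor_shiftRename hC hN,
    σ.le_extendShifted τ N, hσ.extendShifted hτ N, fun B hB => ?_⟩
  refine Atom.subst_subst_of_var fun x hx => Subst.var_subst_shiftRename_extendShifted hN (hC ?_)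
  rcases List.mem_cons.1 hB with rfl | hB
  exacts [.inl hx, .inr ⟨B, hB, hx⟩]

theorem exists_forall_mem_of_monotone {α : Type*} {Q : ℕ → α → Prop}
    (hQ : ∀ a, Monotone (Q · a)) {l : List α} (h : ∀ a ∈ l, ∃ n, Q n a) :
    ∃ n, ∀ a ∈ l, Q n a :=
  ((Filter.eventually_all_finite l.finite_toSet).2 fun a ha =>
    let ⟨n, hn⟩ := h a ha
    Filter.eventually_atTop.2 ⟨n, fun _ hm => hQ a hm hn⟩).exists

/-- `LoopInd` graded by the height of `rule` nesting. The `hp` axiom is restricted to `coP ≠ ∅`,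
the side condition of (co-hyp); when `coP = ∅`, a hypothesis in `Ind P` is unfolded into `rule`
steps instead (`LoopInd.exists_loopIndN`). -/
inductive LoopIndN (P coP : Set (Clause S)) : ℕ → Set (Atom S) → Atom S → Prop
  | hp {n : ℕ} {H : Set (Atom S)} {A : Atom S} :
      coP ≠ ∅ → A ∈ H → A ∈ Ind (P ∪ coP) → LoopIndN P coP n H A
  | rule {n : ℕ} {H : Set (Atom S)} {A : Atom S} (r : Atom S × List (Atom S)) :
      r ∈ GroundInst P → r.1 = A → (∀ B ∈ r.2, LoopIndN P coP n (H ∪ {A}) B) →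
      LoopIndN P coP (n + 1) H A

section LoopIndN

variable {P coP : Set (Clause S)}

theorem LoopIndN.mono {n m : ℕ} {H : Set (Atom S)} {A : Atom S}
    (h : LoopIndN P coP n H A) (hnm : n ≤ m) : LoopIndN P coP m H A := by
  induction h generalizing m with
  | hp hcoP hA hind => exact .hp hcoP hA hind
  | rule r hr hrA _ ih =>
    obtain ⟨m, rfl⟩ : ∃ k, m = k + 1 := ⟨m - 1, by omega⟩
    exact .rule r hr hrA fun B hB => ih B hB (by omega)

theorem LoopIndN.monotone (H : Set (Atom S)) (A : Atom S) :
    Monotone fun n => LoopIndN P coP n H A :=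
  fun _ _ hnm h => h.mono hnm

theorem exists_loopIndN_of_mem_Ind {A : Atom S} (h : A ∈ Ind P) :
    ∃ n, ∀ H, LoopIndN P coP n H A := by
  refine h {A | ∃ n, ∀ H, LoopIndN P coP n H A} ?_
  rintro A ⟨r, hr, rfl, hprem⟩
  obtain ⟨n, hn⟩ := exists_forall_mem_of_monotone
    (fun B _ _ hnm h H => (h H).mono hnm) hprem
  exact ⟨n + 1, fun H => .rule r hr rfl fun B hB => hn B hB _⟩

theorem LoopInd.exists_loopIndN {H : Set (Atom S)} {A : Atom S} (h : LoopInd P coP H A) :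
    ∃ n, LoopIndN P coP n H A := by
  induction h with
  | @hp H A hA hind =>
    by_cases hcoP : coP = ∅
    · subst hcoP
      rw [Set.union_empty] at hind
      obtain ⟨n, hn⟩ := exists_loopIndN_of_mem_Ind (coP := ∅) hind
      exact ⟨n, hn H⟩
    · exact ⟨0, .hp hcoP hA hind⟩
  | rule r hr hrA _ ih =>
    obtain ⟨n, hn⟩ := exists_forall_mem_of_monotone (fun B => LoopIndN.monotone _ B) ih
    exact ⟨n + 1, .rule r hr hrA hn⟩

end LoopIndN

structure Admissible (H : Set (Atom S)) (G : List (Atom S)) (E : Set (Eqn S)) (σ : Subst S) :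
    Prop where
  isFinite_hyps : ∀ B ∈ H, B.IsFinite
  isFinite_goal : ∀ A ∈ G, A.IsFinite
  eqnSetFin : EqnSetFin E
  mem_sol : σ ∈ sol E
  hyps_subset_dom : atomsVars H ⊆ σ.dom
  goal_subset_dom : goalVars G ⊆ σ.dom

namespace Admissible

variable {H : Set (Atom S)} {A : Atom S} {G : List (Atom S)} {E : Set (Eqn S)} {σ : Subst S}

theorem vars_subset_dom (h : Admissible H G E σ) :
    eqnVars E ∪ atomsVars H ∪ goalVars G ⊆ σ.dom :=
  Set.union_subset (Set.union_subset h.mem_sol.2.1 h.hyps_subset_dom) h.goal_subset_dom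

theorem head_subset_dom (h : Admissible H (A :: G) E σ) : ∀ x, A.Occurs x → x ∈ σ.dom :=
  fun _ hx => h.goal_subset_dom ⟨A, List.mem_cons_self, hx⟩

theorem image_subst_eq_of_le (h : Admissible H G E σ) {θ : Subst S} (hle : σ.le θ) :
    (fun B => B.subst θ) '' H = (fun B => B.subst σ) '' H :=
  Set.image_congr fun B hB => Atom.subst_eq_of_le hle fun _ hx => h.hyps_subset_dom ⟨B, hB, hx⟩

theorem tail_of_le (h : Admissible H (A :: G) E σ) {E' : Set (Eqn S)} {θ : Subst S}
    (hE' : EqnSetFin E') (hθ : θ ∈ sol E') (hle : σ.le θ) : Admissible H G E' θ where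
  isFinite_hyps := h.isFinite_hyps
  isFinite_goal A hA := h.isFinite_goal A (.tail _ hA)
  eqnSetFin := hE'
  mem_sol := hθ
  hyps_subset_dom := h.hyps_subset_dom.trans hle.dom_subset
  goal_subset_dom := fun _ ⟨B, hB, hx⟩ =>
    hle.dom_subset (h.goal_subset_dom ⟨B, .tail _ hB, hx⟩)

theorem step (h : Admissible H (A :: G) E σ) {C : Clause S} {ρ θ : Subst S} {V : Set ℕ}
    (hρ : FreshRenamingFor ρ C V) (hle : σ.le θ) (hθ : θ ∈ sol (E ∪ atomEqs A (C.head.subst ρ)))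
    (hbody : ∀ B ∈ C.body, ((B.subst ρ).subst θ).Ground) :
    Admissible (H ∪ {A}) (C.body.map (·.subst ρ)) (E ∪ atomEqs A (C.head.subst ρ)) θ where
  isFinite_hyps := by
    rintro B (hB | rfl)
    exacts [h.isFinite_hyps B hB, h.isFinite_goal _ List.mem_cons_self]
  isFinite_goal := by
    simp only [List.mem_map]
    rintro _ ⟨B, hB, rfl⟩
    exact hρ.isFinite_subst (C.finBody B hB)
  eqnSetFin :=
    h.eqnSetFin.union_atomEqs (h.isFinite_goal _ List.mem_cons_self) (hρ.isFinite_subst C.finHead)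
  mem_sol := hθ
  hyps_subset_dom := by
    rintro x ⟨B, hB | rfl, hx⟩
    exacts [hle.dom_subset (h.hyps_subset_dom ⟨B, hB, hx⟩), hle.dom_subset (h.head_subset_dom x hx)]
  goal_subset_dom := by
    rintro x ⟨_, hB', hx⟩
    obtain ⟨B, hB, rfl⟩ := List.mem_map.1 hB'
    exact Atom.mem_dom_of_ground_subst (hbody B hB) hx

end Admissible

section Completeness

variable {P coP : Set (Clause S)} {n : ℕ} {H : Set (Atom S)} {A : Atom S} {G : List (Atom S)}
  {E : Set (Eqn S)} {σ : Subst S}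

def Resolves (P coP : Set (Clause S)) (H : Set (Atom S)) (G : List (Atom S))
    (E : Set (Eqn S)) (σ : Subst S) : Prop :=
  ∃ E' θ, EqnSetFin E' ∧ θ ∈ sol E' ∧ OpSem S P coP H G E E' ∧ σ.le θ

def HeadResolves (P coP : Set (Clause S)) (H : Set (Atom S)) (A : Atom S) (G : List (Atom S))
    (E : Set (Eqn S)) (σ : Subst S) : Prop :=
  ∃ E' θ, EqnSetFin E' ∧ θ ∈ sol E' ∧ σ.le θ ∧
    ∀ E'', OpSem S P coP H G E' E'' → OpSem S P coP H (A :: G) E E''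

def CompleteAt (P coP : Set (Clause S)) (n : ℕ) (G : List (Atom S)) : Prop :=
  ∀ H E σ, Admissible H G E σ →
    (∀ A ∈ G, LoopIndN P coP n ((fun B => B.subst σ) '' H) (A.subst σ)) →
    Resolves P coP H G E σ

theorem resolves_cons (hadm : Admissible H (A :: G) E σ)
    (hloop : ∀ A' ∈ G, LoopIndN P coP n ((fun B => B.subst σ) '' H) (A'.subst σ))
    (hG : CompleteAt P coP n G) (hA : HeadResolves P coP H A G E σ) :
    Resolves P coP H (A :: G) E σ := by
  obtain ⟨E₁, θ₁, hE₁, hθ₁, hle₁, hstep⟩ := hA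
  have hadm₁ := hadm.tail_of_le hE₁ hθ₁ hle₁
  obtain ⟨E₂, θ₂, hE₂, hθ₂, hop, hle₂⟩ := hG H E₁ θ₁ hadm₁ fun A' hA' => by
    rw [hadm.image_subst_eq_of_le hle₁, Atom.subst_eq_of_le hle₁ fun x hx =>
      hadm.goal_subset_dom ⟨A', .tail _ hA', hx⟩]
    exact hloop A' hA'
  exact ⟨E₂, θ₂, hE₂, hθ₂, hstep E₂ hop, Subst.le_trans hle₁ hle₂⟩

theorem headResolves_of_groundInst (hadm : Admissible H (A :: G) E σ)
    {r : Atom S × List (Atom S)} (hr : r ∈ GroundInst P) (hrA : r.1 = A.subst σ)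
    (hprem : ∀ B ∈ r.2, LoopIndN P coP n ((fun B => B.subst σ) '' H ∪ {A.subst σ}) B)
    (ih : ∀ G, CompleteAt P coP n G) : HeadResolves P coP H A G E σ := by
  obtain ⟨C, hC, τ, hτ, hhead, hbody, hheadg, hbodyg⟩ := hr
  have hCτ : ∀ B ∈ C.head :: C.body, (B.subst τ).Ground := by
    rintro B (_ | ⟨_, hB⟩)
    exacts [hhead ▸ hheadg, hbodyg _ (hbody ▸ List.mem_map_of_mem hB)]
  have hCdom : clauseVars C ⊆ τ.dom := by
    rintro x (hx | ⟨B, hB, hx⟩)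
    exacts [Atom.mem_dom_of_ground_subst (hCτ _ List.mem_cons_self) hx,
      Atom.mem_dom_of_ground_subst (hCτ B (.tail _ hB)) hx]
  obtain ⟨ρ, θ, hρ, hle, hθg, hρθ⟩ := exists_freshRenaming_extension C hadm.mem_sol.1 hτ hCdom
  have hfresh := hρ.mono hadm.vars_subset_dom
  have hAθ : A.subst θ = A.subst σ := Atom.subst_eq_of_le hle hadm.head_subset_dom
  have hheadθ : (C.head.subst ρ).subst θ = A.subst θ := by
    rw [hρθ _ List.mem_cons_self, hAθ, ← hrA, hhead]
  have hθ : θ ∈ sol (E ∪ atomEqs A (C.head.subst ρ)) :=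
    mem_sol_union_atomEqs (mem_sol_of_le hadm.mem_sol hle hθg)
      (fun x hx => hle.dom_subset (hadm.head_subset_dom x hx))
      (fun _ => Atom.mem_dom_of_ground_subst (hρθ _ List.mem_cons_self ▸ hCτ _ List.mem_cons_self))
      hheadθ.symm
  have hadm' := hadm.step hfresh hle hθ fun B hB => hρθ B (.tail _ hB) ▸ hCτ B (.tail _ hB)
  obtain ⟨E₂, θ₂, hE₂, hθ₂, hop, hle₂⟩ := ih _ _ _ _ hadm' fun B' hB' => by
    obtain ⟨B, hB, rfl⟩ := List.mem_map.1 hB'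
    rw [Set.image_union, Set.image_singleton, hadm.image_subst_eq_of_le hle, hAθ,
      hρθ B (.tail _ hB)]
    exact hprem _ (hbody ▸ List.mem_map_of_mem hB)
  exact ⟨E₂, θ₂, hE₂, hθ₂, Subst.le_trans hle hle₂, fun E₃ hop' =>
    OpSem.step (G1 := []) C ρ hC hfresh (congrArg Atom.pred (hrA.symm.trans hhead) :)
      ⟨θ, hθ⟩ hop hop'⟩

theorem headResolves_of_hyp (hadm : Admissible H (A :: G) E σ) (hcoP : coP ≠ ∅) {B : Atom S}
    (hB : B ∈ H) (hBA : B.subst σ = A.subst σ) (hind : A.subst σ ∈ Ind (P ∪ coP))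
    (hunion : ∀ m G, CompleteAt (P ∪ coP) ∅ m G) : HeadResolves P coP H A G E σ := by
  have hσ : σ ∈ sol (E ∪ atomEqs A B) :=
    mem_sol_union_atomEqs hadm.mem_sol hadm.head_subset_dom
      (fun _ hx => hadm.hyps_subset_dom ⟨B, hB, hx⟩) hBA.symm
  have hAfin : A.IsFinite := hadm.isFinite_goal A List.mem_cons_self
  have hadm' : Admissible ∅ [A] (E ∪ atomEqs A B) σ :=
    { isFinite_hyps := fun _ h => absurd h (Set.notMem_empty _)
      isFinite_goal := fun _ h => List.mem_singleton.1 h ▸ hAfin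
      eqnSetFin := hadm.eqnSetFin.union_atomEqs hAfin (hadm.isFinite_hyps B hB)
      mem_sol := hσ
      hyps_subset_dom := fun _ ⟨_, h, _⟩ => absurd h (Set.notMem_empty _)
      goal_subset_dom := fun x ⟨_, h, hx⟩ =>
        hadm.head_subset_dom x (List.mem_singleton.1 h ▸ hx) }
  obtain ⟨m, hm⟩ := exists_loopIndN_of_mem_Ind (coP := ∅) hind
  obtain ⟨E₁, θ, hE₁, hθ, hop, hle⟩ :=
    hunion m [A] ∅ _ σ hadm' fun _ h => List.mem_singleton.1 h ▸ hm _
  exact ⟨E₁, θ, hE₁, hθ, hle, fun E₂ hop' =>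
    OpSem.cohyp (G1 := []) hcoP hB (congrArg Atom.pred hBA.symm :) ⟨σ, hσ⟩ hop hop'⟩

theorem completeAt_of_completeAt_union (hunion : coP ≠ ∅ → ∀ m G, CompleteAt (P ∪ coP) ∅ m G)
    (n : ℕ) (G : List (Atom S)) : CompleteAt P coP n G := by
  induction n using Nat.strong_induction_on generalizing G with
  | _ n ihn =>
  induction G with
  | nil =>
    exact fun H E σ hadm _ => ⟨E, σ, hadm.eqnSetFin, hadm.mem_sol, .empty P coP H E, σ.le_refl⟩
  | cons A G ihG =>
    intro H E σ hadm hloop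
    refine resolves_cons hadm (fun A' hA' => hloop A' (.tail _ hA')) ihG ?_
    cases hloop A List.mem_cons_self with
    | hp hcoP hA hind =>
      obtain ⟨B, hB, hBA⟩ := hA
      exact headResolves_of_hyp hadm hcoP hB hBA hind (hunion hcoP)
    | rule r hr hrA hprem =>
      exact headResolves_of_groundInst hadm hr hrA hprem (ihn _ (Nat.lt_succ_self _))

-- Applied twice: first to `P ∪ coP` without coclauses, where the hypothesis is vacuous.
theorem completeAt (P coP : Set (Clause S)) (n : ℕ) (G : List (Atom S)) :
    CompleteAt P coP n G :=
  completeAt_of_completeAt_union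
    (fun _ => completeAt_of_completeAt_union fun h => absurd rfl h) n G

end Completeness

theorem completeness_wrt_loop_general (S : Sig) (P coP : Set (Clause S))
    (H : Set (Atom S)) (hHsyn : ∀ B ∈ H, B.IsFinite)
    (G : List (Atom S)) (hG : ∀ A ∈ G, A.IsFinite)
    (E : Set (Eqn S)) (hE : EqnSetFin E)
    (σ : Subst S) (hσ : σ ∈ sol E)
    (hdomH : atomsVars H ⊆ σ.dom) (hdomG : goalVars G ⊆ σ.dom)
    (h : ∀ A ∈ G, LoopInd P coP ((fun B => B.subst σ) '' H) (A.subst σ)) :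
    ∃ (E' : Set (Eqn S)) (θ : Subst S), EqnSetFin E' ∧ θ ∈ sol E' ∧
      OpSem S P coP H G E E' ∧ σ.le θ := by
  obtain ⟨n, hn⟩ := exists_forall_mem_of_monotone (fun A => LoopIndN.monotone _ (A.subst σ))
    fun A hA => (h A hA).exists_loopIndN
  exact completeAt P coP n G H E σ ⟨hHsyn, hG, hE, hσ, hdomH, hdomG⟩ hn

/-- Completeness w.r.t. the inductive characterization of regular semantics: if `Hσ ⊢ Aiσ`
is derivable in `Loop(P,coP)` for every atom `Ai` of the goal, then resolution of the goal
succeeds and computes an answer extending `σ`. -/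
theorem completeness_wrt_loop (S : Sig) (P coP : Set (Clause S))
    (hP : P.Finite) (hcoP : coP.Finite)
    (H : Set (Atom S)) (hHfin : H.Finite) (hHsyn : ∀ B ∈ H, B.IsFinite)
    (G : List (Atom S)) (hG : ∀ A ∈ G, A.IsFinite)
    (E : Set (Eqn S)) (hE : EqnSetFin E)
    (σ : Subst S) (hσ : σ ∈ sol E)
    (hdomH : atomsVars H ⊆ σ.dom) (hdomG : goalVars G ⊆ σ.dom)
    (h : ∀ A ∈ G, LoopInd P coP ((fun B => B.subst σ) '' H) (A.subst σ)) :
    ∃ (E' : Set (Eqn S)) (θ : Subst S), EqnSetFin E' ∧ θ ∈ sol E' ∧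
      OpSem S P coP H G E E' ∧ σ.le θ :=
  completeness_wrt_loop_general S P coP H hHsyn G hG E hE σ hσ hdomH hdomG h

end FlexLP
end

section
/- The interpretation generated by corules subsumes the inductive interpretation: for every inference system I on a universe U, FlexCo(I,∅) = Ind(I), i.e. when the set of corules is empty, the union of all I-consistent subsets of Ind(I) equals the inductive interpretation of I. -/
/- Generalized inference systems (inference systems with corules) on a universe `U`.
An inference system is a set of rules `(S, c)` with `S` a finite set of premises and
`c` a conclusion. -/

namespace GenIS

variable {U : Type*}

/-- The inference operator `F_I` associated to an inference system `I`. -/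
def infOp (I : Set (Finset U × U)) (X : Set U) : Set U :=
  {c | ∃ S : Finset U, (S, c) ∈ I ∧ ↑S ⊆ X}

/-- `X` is closed w.r.t. `I`. -/
def Closed (I : Set (Finset U × U)) (X : Set U) : Prop := infOp I X ⊆ X

/-- `X` is consistent w.r.t. `I`. -/
def Consistent (I : Set (Finset U × U)) (X : Set U) : Prop := X ⊆ infOp I X

/-- The inductive interpretation of `I`: the least closed set. -/
def IndIS (I : Set (Finset U × U)) : Set U := ⋂₀ {X | Closed I X}

/-- The coinductive interpretation of `I`: the greatest consistent set. -/
def CoIndIS (I : Set (Finset U × U)) : Set U := ⋃₀ {X | Consistent I X}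

/-- The interpretation of the generalized inference system `(I,Ico)`:
the union of all `I`-consistent subsets of `Ind(I ∪ Ico)`. -/
def FlexCoIS (I Ico : Set (Finset U × U)) : Set U :=
  ⋃₀ {X | Consistent I X ∧ X ⊆ IndIS (I ∪ Ico)}

/-- The regular interpretation of the generalized inference system `(I,Ico)`:
the union of all finite `I`-consistent subsets of `Ind(I ∪ Ico)`. -/
def FlexRegIS (I Ico : Set (Finset U × U)) : Set U :=
  ⋃₀ {X | X.Finite ∧ Consistent I X ∧ X ⊆ IndIS (I ∪ Ico)}

lemma infOp_mono (I : Set (Finset U × U)) {X Y : Set U} (h : X ⊆ Y) :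
    infOp I X ⊆ infOp I Y := by
  rintro c ⟨S, hS, hsub⟩
  exact ⟨S, hS, hsub.trans h⟩

lemma closed_ind (I : Set (Finset U × U)) : Closed I (IndIS I) := by
  intro c hc
  intro X hX
  apply hX
  rcases hc with ⟨S, hS, hsub⟩
  exact ⟨S, hS, fun x hx => hsub hx X hX⟩

lemma consistent_ind (I : Set (Finset U × U)) : Consistent I (IndIS I) := by
  have hclosed : Closed I (infOp I (IndIS I)) :=
    infOp_mono I (closed_ind I)
  intro c hc
  exact hc _ hclosed

/-- With no corules, the interpretation generated by corules is the inductive one. -/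
theorem flexco_empty_eq_ind (I : Set (Finset U × U)) :
    FlexCoIS I (∅ : Set (Finset U × U)) = IndIS I := by
  apply Set.Subset.antisymm
  · rintro c ⟨X, ⟨_, hX⟩, hc⟩
    simpa using hX hc
  · intro c hc
    exact ⟨IndIS I, ⟨consistent_ind I, by simp⟩, hc⟩

end GenIS
end

section
/- The interpretation generated by corules is a fixed point of the inference operator: for every generalized inference system (I,Ico) on a universe U, F_I(FlexCo(I,Ico)) = FlexCo(I,Ico). -/
/- Generalized inference systems (inference systems with corules) on a universe `U`.
An inference system is a set of rules `(S, c)` with `S` a finite set of premises and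
`c` a conclusion. -/

namespace GenIS

variable {U : Type*}

/-- The interpretation generated by corules is a fixed point of the inference operator. -/
theorem flexco_fixed_point (I Ico : Set (Finset U × U)) :
    infOp I (FlexCoIS I Ico) = FlexCoIS I Ico := by
  have mono : ∀ X Y : Set U, X ⊆ Y → infOp I X ⊆ infOp I Y := by
    rintro X Y h c ⟨S, hS, hsub⟩; exact ⟨S, hS, hsub.trans h⟩
  have hsubInd : FlexCoIS I Ico ⊆ IndIS (I ∪ Ico) := by
    rintro x ⟨X, ⟨_, hX⟩, hx⟩; exact hX hx
  have hcons : Consistent I (FlexCoIS I Ico) := by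
    rintro x ⟨X, ⟨hXc, hX⟩, hx⟩
    exact mono X (FlexCoIS I Ico) (fun y hy => Set.mem_sUnion.mpr ⟨X, ⟨hXc, hX⟩, hy⟩) (hXc hx)
  apply Set.Subset.antisymm
  · rintro c ⟨S, hS, hsub⟩
    refine ⟨insert c (FlexCoIS I Ico), ⟨?_, ?_⟩, Set.mem_insert _ _⟩
    · rintro x hx
      rcases hx with rfl | hx
      · exact ⟨S, hS, hsub.trans (Set.subset_insert _ _)⟩
      · exact mono _ _ (Set.subset_insert _ _) (hcons hx)
    · rintro x hx
      rcases hx with rfl | hx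
      · refine Set.mem_sInter.mpr fun Y hY => ?_
        exact hY ⟨S, Or.inl hS, fun y hy => Set.mem_sInter.mp (hsubInd (hsub hy)) Y hY⟩
      · exact hsubInd hx
  · exact fun x hx => mono _ _ (fun y hy => hy) (hcons hx)

end GenIS
end

section
/- Strictness of the inclusion of the regular semantics in the declarative semantics (incompleteness example): consider the signature with one constant z, one unary function symbol s and one unary predicate symbol p, and the logic program with coclauses (P,coP) where P = { p(X) :- p(s(X)) } and coP consists of the single cofact p(X). The ground terms are exactly the finite terms s^n(z) for n ∈ ℕ and the unique infinite term s^ω = s(s(s(...))). Then FlexCo(P,coP) = { p(t) | t a ground term } (all of coHB), while FlexReg(P,coP) = { p(s^ω) }; in particular FlexReg(P,coP) is a proper subset of FlexCo(P,coP). -/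
/- Framework: flexible coinductive logic programming (logic programs with coclauses).
   Terms are possibly infinite trees, modelled as M-types of a polynomial functor. -/

namespace FlexLP

/-! ### The incompleteness example:
signature with one constant `z` (encoded `false`), one unary function symbol `s`
(encoded `true`) and one unary predicate symbol `p`;
program `P = { p(X) :- p(s(X)) }` with the single cofact `coP = { p(X) }`. -/

/-- The signature of the example. -/
def exSig : Sig where
  Func := Bool
  far := fun b => cond b 1 0
  Pred := Unit
  par := fun _ => 1

/-- The constant `z`. -/
def zT : Term exSig := PFunctor.M.mk ⟨Sum.inl false, fun i => i.elim0⟩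

/-- `s(t)`. -/
def sApp (t : Term exSig) : Term exSig := PFunctor.M.mk ⟨Sum.inl true, fun _ => t⟩

/-- The finite ground terms `sⁿ(z)`. -/
def sIter : ℕ → Term exSig
  | 0 => zT
  | n + 1 => sApp (sIter n)

/-- The unique infinite ground term `s^ω = s(s(s(...)))`. -/
def sOmega : Term exSig :=
  PFunctor.M.corec (fun _ : Unit => ⟨Sum.inl true, fun _ => ()⟩) ()

/-- The atom `p(t)`. -/
def pAtom (t : Term exSig) : Atom exSig := ⟨(), fun _ => t⟩

lemma var_isFinite (x : ℕ) : Term.IsFinite exSig (Term.var exSig x) := by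
  constructor
  intro i
  exact i.elim0

lemma sApp_isFinite {t : Term exSig} (ht : Term.IsFinite exSig t) :
    Term.IsFinite exSig (sApp t) := by
  constructor
  intro i
  exact ht

/-- The clause `p(X) :- p(s(X))`. -/
def exClause : Clause exSig where
  head := pAtom (Term.var exSig 0)
  body := [pAtom (sApp (Term.var exSig 0))]
  finHead := fun _ => var_isFinite 0
  finBody := by
    intro B hB
    simp only [List.mem_singleton] at hB
    subst hB
    intro i
    exact sApp_isFinite (var_isFinite 0)

/-- The cofact `p(X)`. -/
def exCofact : Clause exSig where
  head := pAtom (Term.var exSig 0)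
  body := []
  finHead := fun _ => var_isFinite 0
  finBody := by intro B hB; cases hB

/-- The program of the example. -/
def exP : Set (Clause exSig) := {exClause}

/-- The coclauses of the example. -/
def excoP : Set (Clause exSig) := {exCofact}

/-! Every ground term of the example signature is `z` or `s` of a ground term, so a ground term
that is no `sⁿ(z)` is bisimilar to `s^ω`. The cofact `p(X)` makes every ground atom inductively
true and the whole complete Herbrand base is a comodel of `p(X) :- p(s(X))`, hence `FlexCo` is
everything. A comodel containing `p(sⁿ(z))` contains every `p(sⁿ⁺ᵏ(z))` and is infinite, whereas
`{p(s^ω)}` is a finite comodel since `s(s^ω) = s^ω`. -/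

section General

variable {S : Sig}

theorem Term.not_ground_var (x : ℕ) : ¬ Term.Ground S (Term.var S x) :=
  fun h => h x (Term.Occurs.root _ rfl)

theorem Term.ground_mk_inl_iff {f : S.Func} {ch : Fin (S.far f) → Term S} :
    Term.Ground S (PFunctor.M.mk ⟨Sum.inl f, ch⟩) ↔ ∀ i, Term.Ground S (ch i) := by
  constructor
  · intro h i x hx
    exact h x (Term.Occurs.child _ i hx)
  · intro h x hx
    cases hx with
    | root _ hroot => cases hroot
    | child _ i hi => exact h i x hi

theorem Term.ground_of_mem_of_isLeft {R : Set (Term S)}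
    (hroot : ∀ t ∈ R, (PFunctor.M.dest t).1.isLeft)
    (hchild : ∀ t ∈ R, ∀ i, (PFunctor.M.dest t).2 i ∈ R) {t : Term S} (ht : t ∈ R) :
    Term.Ground S t := by
  intro x hx
  induction hx with
  | root t hroot' => simpa [hroot'] using hroot t ht
  | child t i _ ih => exact ih (hchild t ht i)

theorem Term.corec_substStep_false_s17 (σ : Subst S) (u : Term S) :
    PFunctor.M.corec (substStep S σ) (u, false) = u := by
  refine PFunctor.M.bisim
    (fun a b => a = PFunctor.M.corec (substStep S σ) (b, false)) ?_ _ _ rfl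
  rintro a b rfl
  rcases hd : PFunctor.M.dest b with ⟨l, ch⟩
  refine ⟨l, fun i => PFunctor.M.corec (substStep S σ) (ch i, false), ch, ?_, rfl, fun _ => rfl⟩
  rw [PFunctor.M.dest_corec]
  rcases l with f | x <;> simp only [substStep, hd] <;> rfl

theorem Term.mk_inl_subst (σ : Subst S) (f : S.Func) (ch : Fin (S.far f) → Term S) :
    Term.subst (S := S) (PFunctor.M.mk ⟨Sum.inl f, ch⟩) σ =
      PFunctor.M.mk ⟨Sum.inl f, fun i => (ch i).subst σ⟩ :=
  (PFunctor.M.mk_dest _).symm.trans (congrArg PFunctor.M.mk ((PFunctor.M.dest_corec _ _).trans rfl))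

theorem Term.var_subst_of_eq_some {σ : Subst S} {x : ℕ} {u : Term S}
    (h : σ.toFun x = some u) : (Term.var S x).subst σ = u := by
  rw [← PFunctor.M.mk_dest ((Term.var S x).subst σ), ← PFunctor.M.mk_dest u]
  congr 1
  rcases hu : PFunctor.M.dest u with ⟨l, ch⟩
  rw [Term.subst, PFunctor.M.dest_corec]
  have hv : PFunctor.M.dest (Term.var S x) = ⟨Sum.inr x, fun i => i.elim0⟩ := rfl
  simp only [substStep, hv, h, hu]
  exact congrArg (Sigma.mk l) (funext fun i => Term.corec_substStep_false_s17 σ (ch i))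

theorem Term.var_subst_of_eq_none {σ : Subst S} {x : ℕ} (h : σ.toFun x = none) :
    (Term.var S x).subst σ = Term.var S x := by
  rw [← PFunctor.M.mk_dest ((Term.var S x).subst σ), Term.subst, PFunctor.M.dest_corec]
  have hv : PFunctor.M.dest (Term.var S x) = ⟨Sum.inr x, fun i => i.elim0⟩ := rfl
  simp only [substStep, hv, h]
  exact congrArg (fun ch => PFunctor.M.mk (F := TermP S) ⟨Sum.inr x, ch⟩)
    (funext fun i : Fin 0 => i.elim0)

def Subst.single (x : ℕ) (t : Term S) : Subst S where
  toFun y := if y = x then some t else none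
  finDom := (Set.finite_singleton x).subset fun y hy => by
    by_contra hne
    simp [Set.mem_singleton_iff.not.mp hne] at hy

theorem Subst.single_toFun_self (x : ℕ) (t : Term S) : (Subst.single x t).toFun x = some t :=
  if_pos rfl

theorem Subst.ground_single {x : ℕ} {t : Term S} (ht : Term.Ground S t) :
    (Subst.single x t).Ground := by
  intro y u hu
  by_cases hy : y = x
  · simp only [Subst.single, if_pos hy, Option.some.injEq] at hu
    exact hu ▸ ht
  · simp [Subst.single, if_neg hy] at hu

def coHB (S : Sig) : Set (Atom S) := {A | A.Ground}

theorem TP_subset_coHB (P : Set (Clause S)) (I : Set (Atom S)) : TP P I ⊆ coHB S := by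
  rintro A ⟨r, ⟨-, -, -, -, -, -, hground, -⟩, rfl, -⟩
  exact hground

theorem Ind_subset_of_isModel {P : Set (Clause S)} {I : Set (Atom S)} (hI : IsModel P I) :
    Ind P ⊆ I :=
  Set.sInter_subset_of_mem hI

theorem Ind_subset_coHB (P : Set (Clause S)) : Ind P ⊆ coHB S :=
  Ind_subset_of_isModel (TP_subset_coHB P _)

theorem mem_Ind_of_fact {P : Set (Clause S)} {A : Atom S} (h : (A, []) ∈ GroundInst P) :
    A ∈ Ind P :=
  fun _ hI => hI ⟨_, h, rfl, by simp⟩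

theorem FlexCo_eq_Ind_of_isComodel {P coP : Set (Clause S)} (h : IsComodel P (Ind (P ∪ coP))) :
    FlexCo P coP = Ind (P ∪ coP) :=
  (Set.sUnion_subset fun _ hI => hI.2).antisymm (Set.subset_sUnion_of_mem ⟨h, le_rfl⟩)

theorem FlexReg_subset_FlexCo (P coP : Set (Clause S)) : FlexReg P coP ⊆ FlexCo P coP :=
  Set.sUnion_mono fun _ hI => hI.2

end General

theorem dest_sApp (t : Term exSig) :
    PFunctor.M.dest (sApp t) = ⟨Sum.inl true, fun _ => t⟩ := rfl

theorem dest_sOmega : PFunctor.M.dest sOmega = ⟨Sum.inl true, fun _ => sOmega⟩ :=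
  (PFunctor.M.dest_corec _ _).trans rfl

theorem sApp_sOmega : sApp sOmega = sOmega :=
  (congrArg PFunctor.M.mk dest_sOmega).symm.trans (PFunctor.M.mk_dest sOmega)

theorem sApp_injective : Function.Injective sApp := fun _ _ h =>
  congrFun (eq_of_heq (Sigma.mk.inj_iff.mp (congrArg PFunctor.M.dest h)).2) ⟨0, Nat.one_pos⟩

theorem zT_ne_sApp (t : Term exSig) : zT ≠ sApp t := fun h => by
  cases congrArg (fun u => (PFunctor.M.dest u).1) h

theorem zT_ne_sOmega : zT ≠ sOmega :=
  sApp_sOmega ▸ zT_ne_sApp sOmega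

theorem sIter_injective : Function.Injective sIter := by
  intro m n h
  induction m generalizing n with
  | zero => cases n with
    | zero => rfl
    | succ n => exact absurd h (zT_ne_sApp _)
  | succ m ih => cases n with
    | zero => exact absurd h.symm (zT_ne_sApp _)
    | succ n => exact congrArg Nat.succ (ih (sApp_injective h))

theorem ground_zT : Term.Ground exSig zT :=
  Term.ground_mk_inl_iff.mpr fun i => i.elim0

theorem ground_sApp_iff {t : Term exSig} : Term.Ground exSig (sApp t) ↔ Term.Ground exSig t :=
  Term.ground_mk_inl_iff.trans ⟨fun h => h ⟨0, Nat.one_pos⟩, fun h _ => h⟩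

theorem ground_sIter (n : ℕ) : Term.Ground exSig (sIter n) := by
  induction n with
  | zero => exact ground_zT
  | succ n ih => exact ground_sApp_iff.mpr ih

theorem ground_sOmega : Term.Ground exSig sOmega := by
  refine Term.ground_of_mem_of_isLeft (R := {sOmega}) ?_ ?_ rfl <;> rintro t rfl
  · rw [dest_sOmega]; rfl
  · -- `dest sOmega` occurs in the type of the child index, so it is generalized, not rewritten
    have hd := dest_sOmega
    generalize PFunctor.M.dest sOmega = d at hd ⊢
    subst hd
    exact fun _ => rfl

theorem eq_zT_or_exists_eq_sApp_of_ground {t : Term exSig} (ht : Term.Ground exSig t) :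
    t = zT ∨ ∃ u, Term.Ground exSig u ∧ t = sApp u := by
  rcases hd : PFunctor.M.dest t with ⟨(_ | _) | x, ch⟩ <;>
    rw [← PFunctor.M.mk_dest t, hd] at ht ⊢
  · exact Or.inl (congrArg (fun ch => PFunctor.M.mk (F := TermP exSig) ⟨Sum.inl false, ch⟩)
      (funext fun i : Fin 0 => i.elim0))
  · refine Or.inr ⟨ch ⟨0, Nat.one_pos⟩, Term.ground_mk_inl_iff.mp ht _, ?_⟩
    exact congrArg (fun ch => PFunctor.M.mk (F := TermP exSig) ⟨Sum.inl true, ch⟩)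
      (funext fun i : Fin 1 => congrArg ch (Subsingleton.elim i 0))
  · exact absurd (Term.Occurs.root _ rfl) (ht x)

theorem eq_sOmega_of_ground_of_forall_ne_sIter {t : Term exSig} (ht : Term.Ground exSig t)
    (hne : ∀ n, t ≠ sIter n) : t = sOmega := by
  refine PFunctor.M.bisim
    (fun a b => b = sOmega ∧ Term.Ground exSig a ∧ ∀ n, a ≠ sIter n) ?_ t sOmega ⟨rfl, ht, hne⟩
  rintro a _ ⟨rfl, ha, hane⟩
  obtain rfl | ⟨u, hu, rfl⟩ := eq_zT_or_exists_eq_sApp_of_ground ha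
  · exact absurd rfl (hane 0)
  · refine ⟨_, _, _, dest_sApp u, dest_sOmega, fun _ => ⟨rfl, hu, fun n h => hane (n + 1) ?_⟩⟩
    rw [h]
    rfl

theorem ground_iff_exists_eq_sIter_or_eq_sOmega (t : Term exSig) :
    Term.Ground exSig t ↔ (∃ n, t = sIter n) ∨ t = sOmega := by
  refine ⟨fun ht => ?_, ?_⟩
  · by_cases h : ∃ n, t = sIter n
    · exact Or.inl h
    · exact Or.inr (eq_sOmega_of_ground_of_forall_ne_sIter ht (not_exists.mp h))
  · rintro (⟨n, rfl⟩ | rfl)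
    · exact ground_sIter n
    · exact ground_sOmega

theorem pAtom_injective : Function.Injective pAtom := fun a b h => by
  change (pAtom a).args ⟨0, Nat.one_pos⟩ = (pAtom b).args ⟨0, Nat.one_pos⟩
  rw [h]

theorem eq_pAtom (A : Atom exSig) : A = pAtom (A.args ⟨0, Nat.one_pos⟩) := by
  obtain ⟨⟨⟩, args⟩ := A
  exact congrArg (Atom.mk ()) (funext fun i => congrArg args (Subsingleton.elim (α := Fin 1) _ _))

theorem coHB_exSig : coHB exSig = {A | ∃ t, Term.Ground exSig t ∧ A = pAtom t} := by
  ext A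
  refine ⟨fun hA => ⟨_, hA ⟨0, Nat.one_pos⟩, eq_pAtom A⟩, ?_⟩
  rintro ⟨t, ht, rfl⟩
  exact fun _ => ht

theorem sApp_subst (σ : Subst exSig) (u : Term exSig) : (sApp u).subst σ = sApp (u.subst σ) :=
  Term.mk_inl_subst σ true _

theorem mem_groundInst_exP {r : Atom exSig × List (Atom exSig)} :
    r ∈ GroundInst exP ↔ ∃ t, Term.Ground exSig t ∧ r = (pAtom t, [pAtom (sApp t)]) := by
  constructor
  · rintro ⟨C, rfl, σ, hσ, hhead, hbody, hground, -⟩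
    cases hx : σ.toFun 0 with
    | none =>
      have hvar : r.1 = pAtom (Term.var exSig 0) :=
        hhead.trans (congrArg pAtom (Term.var_subst_of_eq_none hx))
      exact absurd (hvar ▸ hground ⟨0, Nat.one_pos⟩) (Term.not_ground_var 0)
    | some u =>
      refine ⟨u, hσ 0 u hx, Prod.ext ?_ ?_⟩
      · rw [hhead]
        exact congrArg pAtom (Term.var_subst_of_eq_some hx)
      · rw [hbody]
        exact congrArg (fun t => [pAtom t]) ((sApp_subst σ _).trans
          (congrArg sApp (Term.var_subst_of_eq_some hx)))
  · rintro ⟨t, ht, rfl⟩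
    have hsubst := Term.var_subst_of_eq_some (Subst.single_toFun_self 0 t)
    refine ⟨exClause, rfl, Subst.single 0 t, Subst.ground_single ht, ?_, ?_, fun _ => ht, ?_⟩
    · exact congrArg pAtom hsubst.symm
    · exact congrArg (fun t => [pAtom t]) ((sApp_subst _ _).trans (congrArg sApp hsubst)).symm
    · intro B hB
      rw [List.mem_singleton.mp hB]
      exact fun _ => ground_sApp_iff.mpr ht

theorem cofact_mem_groundInst {t : Term exSig} (ht : Term.Ground exSig t) :
    (pAtom t, []) ∈ GroundInst (exP ∪ excoP) :=
  ⟨exCofact, Or.inr rfl, Subst.single 0 t, Subst.ground_single ht,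
    congrArg pAtom (Term.var_subst_of_eq_some (Subst.single_toFun_self 0 t)).symm, rfl,
    fun _ => ht, by simp⟩

theorem Ind_exP_union_excoP : Ind (exP ∪ excoP) = coHB exSig := by
  refine (Ind_subset_coHB _).antisymm ?_
  rw [coHB_exSig]
  rintro _ ⟨t, ht, rfl⟩
  exact mem_Ind_of_fact (cofact_mem_groundInst ht)

theorem pAtom_mem_TP_exP {I : Set (Atom exSig)} {t : Term exSig} (ht : Term.Ground exSig t)
    (hs : pAtom (sApp t) ∈ I) : pAtom t ∈ TP exP I :=
  ⟨_, mem_groundInst_exP.mpr ⟨t, ht, rfl⟩, rfl, by simpa using hs⟩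

theorem pAtom_sApp_mem_of_isComodel {I : Set (Atom exSig)} (hI : IsComodel exP I)
    {t : Term exSig} (ht : pAtom t ∈ I) : pAtom (sApp t) ∈ I := by
  obtain ⟨r, hr, hhead, hbody⟩ := hI ht
  obtain ⟨u, -, rfl⟩ := mem_groundInst_exP.mp hr
  obtain rfl := pAtom_injective hhead
  simpa using hbody

theorem infinite_of_isComodel_of_pAtom_sIter_mem {I : Set (Atom exSig)} (hI : IsComodel exP I)
    {n : ℕ} (hn : pAtom (sIter n) ∈ I) : I.Infinite := by
  have hmem : ∀ k, pAtom (sIter (n + k)) ∈ I := fun k => by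
    induction k with
    | zero => exact hn
    | succ k ih => exact pAtom_sApp_mem_of_isComodel hI ih
  refine Set.infinite_of_injective_forall_mem (fun a b h => ?_) hmem
  simpa using sIter_injective (pAtom_injective h)

theorem isComodel_exP_coHB : IsComodel exP (coHB exSig) := by
  rw [coHB_exSig]
  rintro _ ⟨t, ht, rfl⟩
  exact pAtom_mem_TP_exP ht ⟨_, ground_sApp_iff.mpr ht, rfl⟩

theorem FlexCo_exP_excoP : FlexCo exP excoP = coHB exSig := by
  rw [FlexCo_eq_Ind_of_isComodel (Ind_exP_union_excoP ▸ isComodel_exP_coHB), Ind_exP_union_excoP]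

theorem FlexReg_exP_excoP : FlexReg exP excoP = {pAtom sOmega} := by
  refine Set.Subset.antisymm ?_ (Set.singleton_subset_iff.mpr ?_)
  · rintro A ⟨I, ⟨hfin, hI, hInd⟩, hA⟩
    rw [Ind_exP_union_excoP, coHB_exSig] at hInd
    obtain ⟨t, ht, rfl⟩ := hInd hA
    obtain ⟨n, rfl⟩ | rfl := (ground_iff_exists_eq_sIter_or_eq_sOmega t).mp ht
    · exact absurd hfin (infinite_of_isComodel_of_pAtom_sIter_mem hI hA)
    · rfl
  · refine ⟨{pAtom sOmega}, ⟨Set.finite_singleton _, ?_, ?_⟩, rfl⟩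
    · rintro _ rfl
      exact pAtom_mem_TP_exP ground_sOmega (by rw [sApp_sOmega]; rfl)
    · rw [Set.singleton_subset_iff, Ind_exP_union_excoP, coHB_exSig]
      exact ⟨sOmega, ground_sOmega, rfl⟩

/-- Strictness of the inclusion of the regular declarative semantics in the declarative
semantics: the ground terms of the example signature are exactly the `sⁿ(z)` and `s^ω`;
`FlexCo(P,coP)` is the whole complete Herbrand base `{p(t) | t ground}`, whereas
`FlexReg(P,coP) = {p(s^ω)}`, a proper subset. -/
theorem regular_strictly_below_declarative :
    (∀ t : Term exSig, Term.Ground exSig t ↔ ((∃ n, t = sIter n) ∨ t = sOmega)) ∧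
    FlexCo exP excoP = {A | ∃ t : Term exSig, Term.Ground exSig t ∧ A = pAtom t} ∧
    FlexReg exP excoP = {pAtom sOmega} ∧
    FlexReg exP excoP ⊂ FlexCo exP excoP := by
  refine ⟨ground_iff_exists_eq_sIter_or_eq_sOmega, FlexCo_exP_excoP.trans coHB_exSig,
    FlexReg_exP_excoP, (Set.ssubset_iff_of_subset (FlexReg_subset_FlexCo _ _)).mpr ?_⟩
  rw [FlexCo_exP_excoP, coHB_exSig, FlexReg_exP_excoP]
  exact ⟨pAtom zT, ⟨zT, ground_zT, rfl⟩, fun h => zT_ne_sOmega (pAtom_injective h)⟩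

end FlexLP
end
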